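/- arXiv:1605.03167 — 6 statements merged into one kernel-verified Lean document; each statement's English description precedes it below -/
import Mathlib

section
/- Let α, β ∈ ℝ⁺ \ {1}, φ₁, φ₂, ψ entire, and Θₙ(x) = α^{φ₁(x)} (dⁿ/dxⁿ)(ψ(x)β^{−φ₂(x)}). Then for all n ≥ 0: ∑_{p=0}^{n} (n choose p) [Θ_{n−p+1}(x) ψ^{(p)}(x) − Θ_{n−p}(x) ψ^{(p+1)}(x)] = −(log β) ∑_{k=0}^{n} ∑_{p=0}^{n−k} (n choose k)((n−k) choose p) Θ_{n−p−k}(x) ψ^{(p)}(x) φ₂^{(k+1)}(x). -/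
/-!
Put `g = ψ · β^{-φ₂}`, so that `Θₙ = α^{φ₁} g⁽ⁿ⁾`. Since `(β^{-φ₂})' = -log β · φ₂' β^{-φ₂}`, the
Wronskian `ψ g' - ψ' g` equals `-log β · φ₂' ψ g`. Differentiating this identity `n` times,
Leibniz's rule turns the left side into the left-hand sum and the triple product on the right
into the double sum; multiplying by the constant `α^{φ₁(x)}` gives the recurrence.
-/

open Complex Finset

section

variable {𝕜 : Type*} [NontriviallyNormedField 𝕜]

section NormedRing

variable {𝔸 : Type*} [NormedRing 𝔸] [NormedAlgebra 𝕜 𝔸]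

lemma iteratedDeriv_mul_mul {f g h : 𝕜 → 𝔸} {x : 𝕜} {n : ℕ} (hf : ContDiffAt 𝕜 n f x)
    (hg : ContDiffAt 𝕜 n g x) (hh : ContDiffAt 𝕜 n h x) :
    iteratedDeriv n (fun z => f z * (g z * h z)) x =
      ∑ k ∈ range (n + 1), ∑ p ∈ range (n - k + 1),
        (n.choose k : 𝔸) * ((n - k).choose p : 𝔸) *
          iteratedDeriv k f x * iteratedDeriv p g x * iteratedDeriv (n - k - p) h x := by
  rw [iteratedDeriv_fun_mul hf (hg.mul hh)]
  refine sum_congr rfl fun k _ => ?_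
  have hkn : ((n - k : ℕ) : WithTop ℕ∞) ≤ n := by exact_mod_cast Nat.sub_le n k
  rw [iteratedDeriv_fun_mul (hg.of_le hkn) (hh.of_le hkn), mul_sum]
  refine sum_congr rfl fun p _ => ?_
  simp only [mul_assoc]
  rw [← mul_assoc (iteratedDeriv k f x), ← Nat.cast_comm, mul_assoc]

noncomputable def wronskian (f g : 𝕜 → 𝔸) : 𝕜 → 𝔸 :=
  fun z => f z * deriv g z - deriv f z * g z

lemma iteratedDeriv_wronskian {f g : 𝕜 → 𝔸} {n : ℕ}
    (hf : ContDiff 𝕜 (n + 1) f) (hg : ContDiff 𝕜 (n + 1) g) (x : 𝕜) :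
    iteratedDeriv n (wronskian f g) x =
      ∑ p ∈ range (n + 1), (n.choose p : 𝔸) *
        (iteratedDeriv p f x * iteratedDeriv (n - p + 1) g x
          - iteratedDeriv (p + 1) f x * iteratedDeriv (n - p) g x) := by
  have hn : (n : WithTop ℕ∞) ≤ n + 1 := by exact_mod_cast Nat.le_succ n
  rw [show wronskian f g = fun z => f z * deriv g z - deriv f z * g z from rfl,
    iteratedDeriv_fun_sub
      ((hf.of_le hn).mul hg.deriv').contDiffAt (hf.deriv'.mul (hg.of_le hn)).contDiffAt,
    iteratedDeriv_fun_mul (hf.of_le hn).contDiffAt hg.deriv'.contDiffAt,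
    iteratedDeriv_fun_mul hf.deriv'.contDiffAt (hg.of_le hn).contDiffAt, ← sum_sub_distrib]
  refine sum_congr rfl fun p _ => ?_
  simp only [← iteratedDeriv_succ', mul_sub, mul_assoc]

end NormedRing

lemma wronskian_self_mul_apply {𝔸 : Type*} [NormedCommRing 𝔸] [NormedAlgebra 𝕜 𝔸]
    {f e : 𝕜 → 𝔸} {z : 𝕜} (hf : DifferentiableAt 𝕜 f z) (he : DifferentiableAt 𝕜 e z) :
    wronskian f (fun w => f w * e w) z = f z * f z * deriv e z := by
  rw [wronskian, deriv_fun_mul hf he]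
  ring

end

theorem recurrence_t_deriv_general
    (α β : ℝ)
    (φ₁ φ₂ ψ : ℂ → ℂ) (hφ₂ : Differentiable ℂ φ₂)
    (hψ : Differentiable ℂ ψ)
    (Θ : ℕ → ℂ → ℂ)
    (hΘ : ∀ n x, Θ n x = Complex.exp (φ₁ x * (Real.log α : ℂ)) *
      iteratedDeriv n (fun z => ψ z * Complex.exp (-(φ₂ z) * (Real.log β : ℂ))) x)
    (n : ℕ) (x : ℂ) :
    ∑ p ∈ Finset.range (n + 1), (n.choose p : ℂ) *
        (Θ (n - p + 1) x * iteratedDeriv p ψ x - Θ (n - p) x * iteratedDeriv (p + 1) ψ x)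
    = -(Real.log β : ℂ) *
      ∑ k ∈ Finset.range (n + 1), ∑ p ∈ Finset.range (n - k + 1),
        (n.choose k : ℂ) * ((n - k).choose p : ℂ) *
          Θ (n - p - k) x * iteratedDeriv p ψ x * iteratedDeriv (k + 1) φ₂ x := by
  set L : ℂ := (Real.log β : ℂ)
  set e : ℂ → ℂ := fun z => exp (-(φ₂ z) * L)
  set g : ℂ → ℂ := fun z => ψ z * e z
  have he : Differentiable ℂ e := (hφ₂.neg.mul_const L).cexp
  have hg : Differentiable ℂ g := hψ.mul he
  have hW : wronskian ψ g = fun z => -L * (deriv φ₂ z * (ψ z * g z)) := by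
    funext z
    have hde : deriv e z = e z * (-deriv φ₂ z * L) :=
      ((hφ₂ z).hasDerivAt.neg.mul_const L).cexp.deriv
    rw [wronskian_self_mul_apply (hψ z) (he z), hde]
    ring
  calc _ = exp (φ₁ x * Real.log α) * iteratedDeriv n (wronskian ψ g) x := by
        rw [iteratedDeriv_wronskian hψ.contDiff hg.contDiff, mul_sum]
        simp only [hΘ]
        exact sum_congr rfl fun p _ => by ring
    _ = exp (φ₁ x * Real.log α) *
          (-L * iteratedDeriv n (fun z => deriv φ₂ z * (ψ z * g z)) x) := by
        rw [hW, iteratedDeriv_const_mul_field]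
    _ = _ := by
        rw [iteratedDeriv_mul_mul hφ₂.contDiff.deriv'.contDiffAt hψ.contDiff.contDiffAt
          hg.contDiff.contDiffAt]
        simp only [hΘ, mul_sum, ← iteratedDeriv_succ']
        refine sum_congr rfl fun k _ => sum_congr rfl fun p _ => ?_
        rw [show n - k - p = n - p - k by omega]
        ring

theorem recurrence_t_deriv
    (α β : ℝ) (hα : 0 < α) (hα1 : α ≠ 1) (hβ : 0 < β) (hβ1 : β ≠ 1)
    (φ₁ φ₂ ψ : ℂ → ℂ) (hφ₁ : Differentiable ℂ φ₁) (hφ₂ : Differentiable ℂ φ₂)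
    (hψ : Differentiable ℂ ψ)
    (Θ : ℕ → ℂ → ℂ)
    (hΘ : ∀ n x, Θ n x = Complex.exp (φ₁ x * (Real.log α : ℂ)) *
      iteratedDeriv n (fun z => ψ z * Complex.exp (-(φ₂ z) * (Real.log β : ℂ))) x)
    (n : ℕ) (x : ℂ) :
    ∑ p ∈ Finset.range (n + 1), (n.choose p : ℂ) *
        (Θ (n - p + 1) x * iteratedDeriv p ψ x - Θ (n - p) x * iteratedDeriv (p + 1) ψ x)
    = -(Real.log β : ℂ) *
      ∑ k ∈ Finset.range (n + 1), ∑ p ∈ Finset.range (n - k + 1),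
        (n.choose k : ℂ) * ((n - k).choose p : ℂ) *
          Θ (n - p - k) x * iteratedDeriv p ψ x * iteratedDeriv (k + 1) φ₂ x :=
  recurrence_t_deriv_general α β φ₁ φ₂ ψ hφ₂ hψ Θ hΘ n x
end

section
/- Let α, β ∈ ℝ⁺ \ {1}, φ₁, φ₂, ψ entire, and Θₙ(x) = α^{φ₁(x)} (dⁿ/dxⁿ)(ψ(x)β^{−φ₂(x)}). Then for all n ≥ 0: ∑_{p=0}^{n} (n choose p) [Θ_{n−p}′(x) ψ^{(p)}(x) − (log α) φ₁′(x) Θ_{n−p}(x) ψ^{(p)}(x) − Θ_{n−p}(x) ψ^{(p+1)}(x)] = −(log β) ∑_{k=0}^{n} ∑_{p=0}^{n−k} (n choose k)((n−k) choose p) Θ_{n−p−k}(x) ψ^{(p)}(x) φ₂^{(k+1)}(x). -/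
open Complex Finset

/-! With `g = ψ β^{-φ₂}` one has `Θ_m = α^{φ₁} g^{(m)}`, hence
`Θ_m' - (log α) φ₁' Θ_m = α^{φ₁} g^{(m+1)}`, and by the Leibniz rule the left-hand side is
`α^{φ₁} (ψ g' - ψ' g)^{(n)}`. Since `g' = ψ' β^{-φ₂} - (log β) φ₂' g`, this Wronskian equals
`-(log β) φ₂' ψ g`, and the Leibniz rule for the triple product `φ₂' ψ g` gives the right-hand side.
-/

section Leibniz

variable {𝕜 𝔸 : Type*} [NontriviallyNormedField 𝕜] [NormedRing 𝔸] [NormedAlgebra 𝕜 𝔸]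
  {f g h : 𝕜 → 𝔸} {n : ℕ} {x : 𝕜}

theorem iteratedDeriv_fun_mul_mul (hf : ContDiff 𝕜 n f) (hg : ContDiff 𝕜 n g)
    (hh : ContDiff 𝕜 n h) :
    iteratedDeriv n (fun z => f z * (g z * h z)) x =
      ∑ k ∈ range (n + 1), ∑ p ∈ range (n - k + 1),
        (n.choose k : 𝔸) * ((n - k).choose p : 𝔸) *
          (iteratedDeriv k f x * (iteratedDeriv p g x * iteratedDeriv (n - k - p) h x)) := by
  rw [iteratedDeriv_fun_mul hf.contDiffAt (hg.mul hh).contDiffAt]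
  refine sum_congr rfl fun k _ => ?_
  have hle : ((n - k : ℕ) : WithTop ℕ∞) ≤ n := by exact_mod_cast Nat.sub_le n k
  rw [iteratedDeriv_fun_mul (hg.of_le hle).contDiffAt (hh.of_le hle).contDiffAt, mul_sum]
  refine sum_congr rfl fun p _ => ?_
  simp only [mul_assoc, ((Nat.cast_commute _ _).symm : Commute (iteratedDeriv k f x) _).left_comm]

theorem iteratedDeriv_mul_deriv_sub_deriv_mul (hf : ContDiff 𝕜 (n + 1) f)
    (hg : ContDiff 𝕜 (n + 1) g) :
    iteratedDeriv n (fun z => f z * deriv g z - deriv f z * g z) x =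
      ∑ p ∈ range (n + 1), (n.choose p : 𝔸) *
        (iteratedDeriv p f x * iteratedDeriv (n - p + 1) g x
          - iteratedDeriv (p + 1) f x * iteratedDeriv (n - p) g x) := by
  have hn : ((n : ℕ) : WithTop ℕ∞) ≤ n + 1 := by exact_mod_cast Nat.le_succ n
  rw [iteratedDeriv_fun_sub ((hf.of_le hn).mul hg.deriv').contDiffAt
      (hf.deriv'.mul (hg.of_le hn)).contDiffAt,
    iteratedDeriv_fun_mul (hf.of_le hn).contDiffAt hg.deriv'.contDiffAt,
    iteratedDeriv_fun_mul hf.deriv'.contDiffAt (hg.of_le hn).contDiffAt, ← sum_sub_distrib]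
  refine sum_congr rfl fun p _ => ?_
  simp only [← iteratedDeriv_succ', mul_sub, mul_assoc]

end Leibniz

theorem deriv_cexp_mul_mul {φ G : ℂ → ℂ} {x : ℂ} (c : ℂ) (hφ : DifferentiableAt ℂ φ x)
    (hG : DifferentiableAt ℂ G x) :
    deriv (fun y => cexp (φ y * c) * G y) x =
      c * deriv φ x * (cexp (φ x * c) * G x) + cexp (φ x * c) * deriv G x := by
  have hA : HasDerivAt (fun y => cexp (φ y * c)) (cexp (φ x * c) * (deriv φ x * c)) x :=
    (hφ.hasDerivAt.mul_const c).cexp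
  rw [(hA.fun_mul hG.hasDerivAt).deriv]
  ring

theorem mul_deriv_sub_deriv_mul_mul_cexp {φ ψ : ℂ → ℂ} (c : ℂ) (hφ : Differentiable ℂ φ)
    (hψ : Differentiable ℂ ψ) :
    (fun z => ψ z * deriv (fun y => ψ y * cexp (-φ y * c)) z
        - deriv ψ z * (ψ z * cexp (-φ z * c)))
      = fun z => -c * (deriv φ z * (ψ z * (ψ z * cexp (-φ z * c)))) := by
  funext z
  have hE : HasDerivAt (fun y => cexp (-φ y * c)) (cexp (-φ z * c) * (-deriv φ z * c)) z :=
    ((hφ z).hasDerivAt.neg.mul_const c).cexp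
  rw [((hψ z).hasDerivAt.fun_mul hE).deriv]
  ring

theorem recurrence_x_deriv_general
    (α β : ℝ)
    (φ₁ φ₂ ψ : ℂ → ℂ) (hφ₁ : Differentiable ℂ φ₁) (hφ₂ : Differentiable ℂ φ₂)
    (hψ : Differentiable ℂ ψ)
    (Θ : ℕ → ℂ → ℂ)
    (hΘ : ∀ n x, Θ n x = Complex.exp (φ₁ x * (Real.log α : ℂ)) *
      iteratedDeriv n (fun z => ψ z * Complex.exp (-(φ₂ z) * (Real.log β : ℂ))) x)
    (n : ℕ) (x : ℂ) :
    ∑ p ∈ Finset.range (n + 1), (n.choose p : ℂ) *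
        (deriv (Θ (n - p)) x * iteratedDeriv p ψ x
          - (Real.log α : ℂ) * deriv φ₁ x * Θ (n - p) x * iteratedDeriv p ψ x
          - Θ (n - p) x * iteratedDeriv (p + 1) ψ x)
    = -(Real.log β : ℂ) *
      ∑ k ∈ Finset.range (n + 1), ∑ p ∈ Finset.range (n - k + 1),
        (n.choose k : ℂ) * ((n - k).choose p : ℂ) *
          Θ (n - p - k) x * iteratedDeriv p ψ x * iteratedDeriv (k + 1) φ₂ x := by
  set g : ℂ → ℂ := fun z => ψ z * cexp (-φ₂ z * Real.log β)
  have hg : Differentiable ℂ g := hψ.mul (hφ₂.neg.mul_const _).cexp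
  have hderivΘ (m : ℕ) : deriv (Θ m) x =
      Real.log α * deriv φ₁ x * Θ m x + cexp (φ₁ x * Real.log α) * iteratedDeriv (m + 1) g x := by
    rw [funext (hΘ m), deriv_cexp_mul_mul _ (hφ₁ x) (hg.contDiff.differentiable_iteratedDeriv m
      (WithTop.coe_lt_top _) x), ← iteratedDeriv_succ]
  calc _ = cexp (φ₁ x * Real.log α) * ∑ p ∈ range (n + 1), (n.choose p : ℂ) *
        (iteratedDeriv p ψ x * iteratedDeriv (n - p + 1) g x
          - iteratedDeriv (p + 1) ψ x * iteratedDeriv (n - p) g x) := by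
        rw [mul_sum]
        refine sum_congr rfl fun p _ => ?_
        rw [hderivΘ, hΘ]
        ring
    _ = cexp (φ₁ x * Real.log α) *
        iteratedDeriv n (fun z => -Real.log β * (deriv φ₂ z * (ψ z * g z))) x := by
        rw [← mul_deriv_sub_deriv_mul_mul_cexp _ hφ₂ hψ,
          iteratedDeriv_mul_deriv_sub_deriv_mul hψ.contDiff hg.contDiff]
    _ = _ := by
        rw [iteratedDeriv_const_mul_field, iteratedDeriv_fun_mul_mul hφ₂.deriv.contDiff hψ.contDiff
          hg.contDiff, mul_left_comm]
        congr 1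
        simp only [mul_sum]
        refine sum_congr rfl fun k _ => sum_congr rfl fun p _ => ?_
        rw [hΘ, ← iteratedDeriv_succ', Nat.sub_right_comm n p k]
        ring

theorem recurrence_x_deriv
    (α β : ℝ) (hα : 0 < α) (hα1 : α ≠ 1) (hβ : 0 < β) (hβ1 : β ≠ 1)
    (φ₁ φ₂ ψ : ℂ → ℂ) (hφ₁ : Differentiable ℂ φ₁) (hφ₂ : Differentiable ℂ φ₂)
    (hψ : Differentiable ℂ ψ)
    (Θ : ℕ → ℂ → ℂ)
    (hΘ : ∀ n x, Θ n x = Complex.exp (φ₁ x * (Real.log α : ℂ)) *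
      iteratedDeriv n (fun z => ψ z * Complex.exp (-(φ₂ z) * (Real.log β : ℂ))) x)
    (n : ℕ) (x : ℂ) :
    ∑ p ∈ Finset.range (n + 1), (n.choose p : ℂ) *
        (deriv (Θ (n - p)) x * iteratedDeriv p ψ x
          - (Real.log α : ℂ) * deriv φ₁ x * Θ (n - p) x * iteratedDeriv p ψ x
          - Θ (n - p) x * iteratedDeriv (p + 1) ψ x)
    = -(Real.log β : ℂ) *
      ∑ k ∈ Finset.range (n + 1), ∑ p ∈ Finset.range (n - k + 1),
        (n.choose k : ℂ) * ((n - k).choose p : ℂ) *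
          Θ (n - p - k) x * iteratedDeriv p ψ x * iteratedDeriv (k + 1) φ₂ x :=
  recurrence_x_deriv_general α β φ₁ φ₂ ψ hφ₁ hφ₂ hψ Θ hΘ n x
end

section
/- Let α, β ∈ ℝ⁺ \ {1}, φ₁, φ₂, ψ entire, and Θₙ(x) = α^{φ₁(x)} (dⁿ/dxⁿ)(ψ(x)β^{−φ₂(x)}). Then for all n ≥ 0: ∑_{p=0}^{n} (n choose p) [Θ_{n−p+1}(x) ψ^{(p)}(x) − Θ_{n−p}′(x) ψ^{(p)}(x) + (log α) φ₁′(x) Θ_{n−p}(x) ψ^{(p)}(x)] = 0. -/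
open Complex Finset

/-! By the product rule, `Θₘ = α^φ₁ · f⁽ᵐ⁾` with `f = ψ β^(-φ₂)` satisfies
`Θₘ' = (log α) φ₁' Θₘ + Θₘ₊₁`, so every summand vanishes on its own. -/

theorem hasDerivAt_cexp_mul_const_mul_iteratedDeriv {φ f : ℂ → ℂ} {c x : ℂ}
    (hφ : DifferentiableAt ℂ φ x) (hf : Differentiable ℂ f) (m : ℕ) :
    HasDerivAt (fun y => cexp (φ y * c) * iteratedDeriv m f y)
      (c * deriv φ x * (cexp (φ x * c) * iteratedDeriv m f x)
        + cexp (φ x * c) * iteratedDeriv (m + 1) f x) x := by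
  have hexp := (hφ.hasDerivAt.mul_const c).cexp
  have hiter : HasDerivAt (iteratedDeriv m f) (iteratedDeriv (m + 1) f x) x := by
    rw [iteratedDeriv_succ]
    exact (hf.contDiff.differentiable_iteratedDeriv' m x).hasDerivAt
  exact (hexp.mul hiter).congr_deriv (by ring)

theorem recurrence_combined_general
    (α β : ℝ)
    (φ₁ φ₂ ψ : ℂ → ℂ) (hφ₁ : Differentiable ℂ φ₁) (hφ₂ : Differentiable ℂ φ₂)
    (hψ : Differentiable ℂ ψ)
    (Θ : ℕ → ℂ → ℂ)
    (hΘ : ∀ n x, Θ n x = Complex.exp (φ₁ x * (Real.log α : ℂ)) *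
      iteratedDeriv n (fun z => ψ z * Complex.exp (-(φ₂ z) * (Real.log β : ℂ))) x)
    (n : ℕ) (x : ℂ) :
    ∑ p ∈ Finset.range (n + 1), (n.choose p : ℂ) *
        (Θ (n - p + 1) x * iteratedDeriv p ψ x
          - deriv (Θ (n - p)) x * iteratedDeriv p ψ x
          + (Real.log α : ℂ) * deriv φ₁ x * Θ (n - p) x * iteratedDeriv p ψ x) = 0 := by
  have hf : Differentiable ℂ fun z => ψ z * cexp (-(φ₂ z) * (Real.log β : ℂ)) :=
    hψ.mul (hφ₂.neg.mul_const _).cexp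
  have hderiv (m : ℕ) :
      deriv (Θ m) x = (Real.log α : ℂ) * deriv φ₁ x * Θ m x + Θ (m + 1) x := by
    rw [show Θ m = _ from funext (hΘ m),
      (hasDerivAt_cexp_mul_const_mul_iteratedDeriv (hφ₁ x) hf m).deriv, hΘ]
  refine Finset.sum_eq_zero fun p _ => ?_
  rw [hderiv]
  ring

theorem recurrence_combined
    (α β : ℝ) (hα : 0 < α) (hα1 : α ≠ 1) (hβ : 0 < β) (hβ1 : β ≠ 1)
    (φ₁ φ₂ ψ : ℂ → ℂ) (hφ₁ : Differentiable ℂ φ₁) (hφ₂ : Differentiable ℂ φ₂)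
    (hψ : Differentiable ℂ ψ)
    (Θ : ℕ → ℂ → ℂ)
    (hΘ : ∀ n x, Θ n x = Complex.exp (φ₁ x * (Real.log α : ℂ)) *
      iteratedDeriv n (fun z => ψ z * Complex.exp (-(φ₂ z) * (Real.log β : ℂ))) x)
    (n : ℕ) (x : ℂ) :
    ∑ p ∈ Finset.range (n + 1), (n.choose p : ℂ) *
        (Θ (n - p + 1) x * iteratedDeriv p ψ x
          - deriv (Θ (n - p)) x * iteratedDeriv p ψ x
          + (Real.log α : ℂ) * deriv φ₁ x * Θ (n - p) x * iteratedDeriv p ψ x) = 0 :=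
  recurrence_combined_general α β φ₁ φ₂ ψ hφ₁ hφ₂ hψ Θ hΘ n x
end

section
/- Let α, β ∈ ℝ⁺ \ {1}, let φ₂ be a complex polynomial of degree 2 and φ₁ a non-constant entire function, and define Θₙ(x) = α^{φ₁(x)} (dⁿ/dxⁿ)(β^{−φ₂(x)}). Then y = Θₙ satisfies the second-order linear ODE: y″ + [ (log β) φ₂′(x) − 2(log α) φ₁′(x) ] y′ + [ (log α)² (φ₁′(x))² − (log α) φ₁″(x) − (log α)(log β) φ₁′(x) φ₂′(x) + (n+1)(log β) φ₂″(x) ] y = 0, for all x. -/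
/-!
Write `f = β^{-φ₂}`. Then `f' = u f` with `u = -(log β) φ₂'` affine, so differentiating
`k + 1` times gives the recurrence `f^{(k+2)} = u f^{(k+1)} + (k+1) u' f^{(k)}`: the function
`g = f^{(n)}` solves `g'' = u g' + (n+1) u' g`. Multiplying by `exp h` with `h = (log α) φ₁`
turns this into a second-order linear ODE for `Θ = exp h · g`, obtained by substituting
`g = exp (-h) Θ`.
-/

open Complex Polynomial

theorem Differentiable.iteratedDeriv {E : Type*} [NormedAddCommGroup E] [NormedSpace ℂ E]
    [CompleteSpace E] {f : ℂ → E} (hf : Differentiable ℂ f) (m : ℕ) :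
    Differentiable ℂ (iteratedDeriv m f) :=
  hf.contDiff.differentiable_iteratedDeriv m (WithTop.coe_lt_top _)

-- Leibniz' rule for `(u f)^{(k+1)}`, which has only two terms since `u'' = 0`.
theorem iteratedDeriv_add_two_of_deriv_eq_mul {f u : ℂ → ℂ} {c : ℂ} (hf : Differentiable ℂ f)
    (hu : ∀ z, HasDerivAt u c z) (hfu : deriv f = fun z => u z * f z) (k : ℕ) :
    iteratedDeriv (k + 2) f =
      fun z => u z * iteratedDeriv (k + 1) f z + (k + 1) * c * iteratedDeriv k f z := by
  have hD := hf.iteratedDeriv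
  induction k with
  | zero =>
    funext z
    conv_lhs => rw [iteratedDeriv_succ, iteratedDeriv_one, hfu]
    refine ((hu z).mul (hf z).hasDerivAt).deriv.trans ?_
    rw [iteratedDeriv_one, iteratedDeriv_zero, hfu]
    push_cast
    ring
  | succ k ih =>
    funext z
    conv_lhs => rw [iteratedDeriv_succ, ih]
    refine (((hu z).mul (hD (k + 1) z).hasDerivAt).add
      ((hD k z).hasDerivAt.const_mul _)).deriv.trans ?_
    rw [← iteratedDeriv_succ, ← iteratedDeriv_succ]
    push_cast
    ring

theorem iteratedDeriv_iteratedDeriv {𝕜 F : Type*} [NontriviallyNormedField 𝕜]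
    [NormedAddCommGroup F] [NormedSpace 𝕜 F] (m n : ℕ) (f : 𝕜 → F) :
    iteratedDeriv m (iteratedDeriv n f) = iteratedDeriv (m + n) f := by
  simp only [iteratedDeriv_eq_iterate, Function.iterate_add_apply]

theorem deriv_polynomial_eval (P : ℂ[X]) :
    deriv (fun z => P.eval z) = fun z => (derivative P).eval z :=
  funext fun _ => P.deriv

theorem iteratedDeriv_two_polynomial_eval (P : ℂ[X]) (z : ℂ) :
    iteratedDeriv 2 (fun z => P.eval z) z = (derivative (derivative P)).eval z := by
  rw [iteratedDeriv_succ, iteratedDeriv_one, deriv_polynomial_eval, Polynomial.deriv]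

theorem Polynomial.eval_derivative_derivative_eq {P : ℂ[X]} (hP : P.natDegree ≤ 2) (y z : ℂ) :
    (derivative (derivative P)).eval y = (derivative (derivative P)).eval z := by
  have hdeg : (derivative (derivative P)).natDegree ≤ 0 := by
    have h₁ := natDegree_derivative_le P
    have h₂ := natDegree_derivative_le (derivative P)
    omega
  rw [eq_C_of_natDegree_le_zero hdeg, eval_C, eval_C]

theorem iteratedDeriv_add_two_exp_eval_mul {P : ℂ[X]} (hP : P.natDegree ≤ 2) (w : ℂ) (k : ℕ)
    (z : ℂ) :
    iteratedDeriv (k + 2) (fun z => exp (P.eval z * w)) z =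
      (derivative P).eval z * w * iteratedDeriv (k + 1) (fun z => exp (P.eval z * w)) z
        + (k + 1) * ((derivative (derivative P)).eval z * w)
          * iteratedDeriv k (fun z => exp (P.eval z * w)) z := by
  have hf : ∀ y, HasDerivAt (fun z => exp (P.eval z * w))
      (exp (P.eval y * w) * ((derivative P).eval y * w)) y :=
    fun y => ((P.hasDerivAt y).mul_const w).cexp
  have hu : ∀ y, HasDerivAt (fun z => (derivative P).eval z * w)
      ((derivative (derivative P)).eval z * w) y := fun y => by
    rw [← Polynomial.eval_derivative_derivative_eq hP y z]
    exact ((derivative P).hasDerivAt y).mul_const w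
  have hfu : deriv (fun z => exp (P.eval z * w)) =
      fun y => (derivative P).eval y * w * exp (P.eval y * w) :=
    funext fun y => (hf y).deriv.trans (mul_comm _ _)
  exact congrFun (iteratedDeriv_add_two_of_deriv_eq_mul (fun y => (hf y).differentiableAt)
    hu hfu k) z

theorem deriv_exp_mul {h g : ℂ → ℂ} (hh : Differentiable ℂ h) (hg : Differentiable ℂ g) :
    deriv (fun z => exp (h z) * g z) = fun z => exp (h z) * (deriv h z * g z + deriv g z) :=
  funext fun z => ((hh z).hasDerivAt.cexp.mul (hg z).hasDerivAt).deriv.trans (by ring)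

theorem iteratedDeriv_two_exp_mul_of_iteratedDeriv_two_eq {h g : ℂ → ℂ} {p q x : ℂ}
    (hh : Differentiable ℂ h) (hg : Differentiable ℂ g)
    (hode : iteratedDeriv 2 g x = p * deriv g x + q * g x) :
    iteratedDeriv 2 (fun z => exp (h z) * g z) x
      - (2 * deriv h x + p) * deriv (fun z => exp (h z) * g z) x
      + (deriv h x ^ 2 - iteratedDeriv 2 h x + p * deriv h x - q) * (exp (h x) * g x) = 0 := by
  have hΘ'' : iteratedDeriv 2 (fun z => exp (h z) * g z) x =
      exp (h x) * deriv h x * (deriv h x * g x + deriv g x)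
        + exp (h x) * ((iteratedDeriv 2 h x * g x + deriv h x * deriv g x)
          + iteratedDeriv 2 g x) := by
    rw [iteratedDeriv_succ, iteratedDeriv_one, deriv_exp_mul hh hg, iteratedDeriv_succ,
      iteratedDeriv_one, iteratedDeriv_succ, iteratedDeriv_one]
    exact ((hh x).hasDerivAt.cexp.mul ((hh.deriv x).hasDerivAt.mul (hg x).hasDerivAt
      |>.add (hg.deriv x).hasDerivAt)).deriv
  rw [hΘ'', deriv_exp_mul hh hg, hode]
  ring

theorem second_order_ode_general
    (α β : ℝ)
    (φ₁ φ₂ : ℂ → ℂ) (hφ₁ : Differentiable ℂ φ₁)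
    (P : Polynomial ℂ) (hP : P.degree = 2) (hφ₂ : ∀ z, φ₂ z = P.eval z)
    (Θ : ℕ → ℂ → ℂ)
    (hΘ : ∀ n x, Θ n x = Complex.exp (φ₁ x * (Real.log α : ℂ)) *
      iteratedDeriv n (fun z => Complex.exp (-(φ₂ z) * (Real.log β : ℂ))) x)
    (n : ℕ) (x : ℂ) :
    iteratedDeriv 2 (Θ n) x
      + ((Real.log β : ℂ) * deriv φ₂ x - 2 * (Real.log α : ℂ) * deriv φ₁ x) * deriv (Θ n) x
      + ((Real.log α : ℂ) ^ 2 * (deriv φ₁ x) ^ 2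
          - (Real.log α : ℂ) * iteratedDeriv 2 φ₁ x
          - (Real.log α : ℂ) * (Real.log β : ℂ) * deriv φ₁ x * deriv φ₂ x
          + ((n : ℂ) + 1) * (Real.log β : ℂ) * iteratedDeriv 2 φ₂ x) * Θ n x = 0 := by
  set a : ℂ := (Real.log α : ℂ)
  set b : ℂ := (Real.log β : ℂ)
  have hφ₂fun : φ₂ = fun z => P.eval z := funext hφ₂
  have hf : (fun z => exp (-(φ₂ z) * b)) = fun z => exp (P.eval z * -b) := by
    funext z; rw [hφ₂, neg_mul, mul_neg]
  set g := iteratedDeriv n (fun z => exp (P.eval z * -b))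
  have hΘfun : Θ n = fun z => exp (φ₁ z * a) * g z := by
    funext z; rw [hΘ, hf]
  have hg : Differentiable ℂ g := Differentiable.iteratedDeriv
    (fun _ => (P.differentiableAt.mul_const _).cexp) n
  have hode : iteratedDeriv 2 g x =
      -(b * deriv φ₂ x) * deriv g x + -((n + 1) * b * iteratedDeriv 2 φ₂ x) * g x := by
    rw [iteratedDeriv_iteratedDeriv, ← iteratedDeriv_succ, add_comm 2,
      iteratedDeriv_add_two_exp_eval_mul (natDegree_eq_of_degree_eq_some hP).le,
      hφ₂fun, deriv_polynomial_eval, iteratedDeriv_two_polynomial_eval]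
    ring
  have key := iteratedDeriv_two_exp_mul_of_iteratedDeriv_two_eq (hφ₁.mul_const a) hg hode
  rw [deriv_mul_const_field, iteratedDeriv_mul_const_field] at key
  rw [hΘfun]
  linear_combination key

theorem second_order_ode
    (α β : ℝ) (hα : 0 < α) (hα1 : α ≠ 1) (hβ : 0 < β) (hβ1 : β ≠ 1)
    (φ₁ φ₂ : ℂ → ℂ) (hφ₁ : Differentiable ℂ φ₁)
    (hφ₁nc : ¬ ∃ c : ℂ, ∀ x, φ₁ x = c)
    (P : Polynomial ℂ) (hP : P.degree = 2) (hφ₂ : ∀ z, φ₂ z = P.eval z)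
    (Θ : ℕ → ℂ → ℂ)
    (hΘ : ∀ n x, Θ n x = Complex.exp (φ₁ x * (Real.log α : ℂ)) *
      iteratedDeriv n (fun z => Complex.exp (-(φ₂ z) * (Real.log β : ℂ))) x)
    (n : ℕ) (x : ℂ) :
    iteratedDeriv 2 (Θ n) x
      + ((Real.log β : ℂ) * deriv φ₂ x - 2 * (Real.log α : ℂ) * deriv φ₁ x) * deriv (Θ n) x
      + ((Real.log α : ℂ) ^ 2 * (deriv φ₁ x) ^ 2
          - (Real.log α : ℂ) * iteratedDeriv 2 φ₁ x
          - (Real.log α : ℂ) * (Real.log β : ℂ) * deriv φ₁ x * deriv φ₂ x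
          + ((n : ℂ) + 1) * (Real.log β : ℂ) * iteratedDeriv 2 φ₂ x) * Θ n x = 0 :=
  second_order_ode_general α β φ₁ φ₂ hφ₁ P hP hφ₂ Θ hΘ n x
end

section
/- Let α, β ∈ ℝ⁺ \ {1}, φ₁, φ₂, ψ entire, Θₙ(x) = α^{φ₁(x)} (dⁿ/dxⁿ)(ψ(x) β^{−φ₂(x)}), and let Ω : ℕ → ℂ be any sequence and (a_k) a sequence of complex numbers. Define Λ(z) = ∑_{k=0}^∞ a_k Ω(k) z^k and Φₙ(x; ζ) = ∑_{k=0}^{⌊n/p⌋} (a_k / (n−pk)!) Θ_{n−pk}(x) Ω(k) ζ^k for a fixed p ∈ ℕ, p ≥ 1. Then, assuming all series converge absolutely, ∑_{n=0}^∞ Φₙ(x; η/t^p) tⁿ = α^{φ₁(x)} ψ(x+t) β^{−φ₂(x+t)} · Λ(η) for t ≠ 0. -/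
open Complex Finset

/-! Θₙ(x) tⁿ / n! is α^{φ₁(x)} times the n-th Taylor term at x of the entire function
ψ β^{−φ₂}, so these terms sum to α^{φ₁(x)} ψ(x+t) β^{−φ₂(x+t)}. Absolute convergence lets us
multiply this series by Λ(η) = ∑ a_k Ω(k) η^k as a double series over (m, k) and then regroup
it along n = m + pk; since tᵐ η^k = (η/t^p)^k tⁿ, the n-th group is Φₙ(x; η/t^p) tⁿ. -/

theorem Nat.mem_range_div_add_one_iff {p n k : ℕ} (hp : 0 < p) :
    k ∈ range (n / p + 1) ↔ p * k ≤ n := by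
  rw [mem_range, Nat.lt_add_one_iff, Nat.le_div_iff_mul_le hp, mul_comm]

theorem HasSum.sum_range_div_add_one_sub_mul {M : Type*} [AddCommMonoid M] [TopologicalSpace M]
    [ContinuousAdd M] [RegularSpace M] {p : ℕ} (hp : 0 < p) {f : ℕ × ℕ → M} {s : M}
    (hf : HasSum f s) :
    HasSum (fun n => ∑ k ∈ range (n / p + 1), f (n - p * k, k)) s := by
  set e : ℕ × ℕ → ℕ × ℕ := fun mk => (mk.1 + p * mk.2, mk.2)
  have he : e.Injective := fun ⟨m₁, k₁⟩ ⟨m₂, k₂⟩ h => by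
    simp only [e, Prod.mk.injEq] at h
    obtain ⟨h₁, rfl⟩ := h
    rw [Nat.add_right_cancel h₁]
  refine ((hasSum_extend_zero he).2 hf).prod_fiberwise fun n => ?_
  have h_fiber : ∀ k ∉ range (n / p + 1), Function.extend e f 0 (n, k) = 0 :=
    fun k hk => Function.extend_apply' _ _ _ fun ⟨⟨m, j⟩, hmj⟩ => hk <| by
      obtain ⟨hm, rfl⟩ := Prod.mk.inj hmj
      rw [Nat.mem_range_div_add_one_iff hp]
      omega
  have h_sum : ∑ k ∈ range (n / p + 1), f (n - p * k, k) =
      ∑ k ∈ range (n / p + 1), Function.extend e f 0 (n, k) := sum_congr rfl fun k hk => by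
    have he_k : e (n - p * k, k) = (n, k) := by
      rw [Nat.mem_range_div_add_one_iff hp] at hk
      simp only [e, Prod.mk.injEq, and_true]
      omega
    rw [← he_k, he.extend_apply]
  rw [h_sum]
  exact hasSum_sum_of_ne_finset_zero h_fiber

theorem Complex.hasSum_iteratedDeriv_mul_pow_div_factorial {f : ℂ → ℂ} (hf : Differentiable ℂ f)
    (x t : ℂ) : HasSum (fun n => iteratedDeriv n f x * t ^ n / n.factorial) (f (x + t)) := by
  refine (hasSum_taylorSeries_of_entire hf x (x + t)).congr_fun fun n => ?_
  simp only [add_sub_cancel_left, smul_eq_mul]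
  ring

theorem pow_mul_pow_sub_mul_eq_div_pow_pow_mul {K : Type*} [Semifield K] {t : K} (ht : t ≠ 0)
    (η : K) {n p k : ℕ} (h : p * k ≤ n) :
    η ^ k * t ^ (n - p * k) = (η / t ^ p) ^ k * t ^ n := by
  rw [div_pow, ← pow_mul, pow_sub₀ _ ht h]
  field_simp

theorem bilateral_generating_function_general
    (α β : ℝ)
    (φ₁ φ₂ ψ : ℂ → ℂ) (hφ₂ : Differentiable ℂ φ₂)
    (hψ : Differentiable ℂ ψ)
    (Θ : ℕ → ℂ → ℂ)
    (hΘ : ∀ n x, Θ n x = Complex.exp (φ₁ x * (Real.log α : ℂ)) *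
      iteratedDeriv n (fun z => ψ z * Complex.exp (-(φ₂ z) * (Real.log β : ℂ))) x)
    (Ω : ℕ → ℂ) (a : ℕ → ℂ) (p : ℕ) (hp : 1 ≤ p)
    (x t η : ℂ) (ht : t ≠ 0) (L : ℂ)
    (hΛ : HasSum (fun k : ℕ => a k * Ω k * η ^ k) L)
    (habs : Summable (fun nk : ℕ × ℕ =>
      ‖a nk.2 * Θ nk.1 x * Ω nk.2 * η ^ nk.2 * t ^ nk.1 / (nk.1.factorial : ℂ)‖))
    (Φ : ℕ → ℂ → ℂ)
    (hΦ : ∀ n ζ, Φ n ζ = ∑ k ∈ Finset.range (n / p + 1),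
      a k / ((n - p * k).factorial : ℂ) * Θ (n - p * k) x * Ω k * ζ ^ k) :
    HasSum (fun n : ℕ => Φ n (η / t ^ p) * t ^ n)
      (Complex.exp (φ₁ x * (Real.log α : ℂ)) * ψ (x + t) *
        Complex.exp (-(φ₂ (x + t)) * (Real.log β : ℂ)) * L) := by
  set c := Complex.exp (φ₁ x * (Real.log α : ℂ))
  set f : ℂ → ℂ := fun z => ψ z * Complex.exp (-(φ₂ z) * (Real.log β : ℂ))
  have hf : Differentiable ℂ f := hψ.mul (hφ₂.neg.mul_const _).cexp
  have hΘ_sum : HasSum (fun n => Θ n x * t ^ n / n.factorial) (c * f (x + t)) :=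
    ((hasSum_iteratedDeriv_mul_pow_div_factorial hf x t).mul_left c).congr_fun fun n => by
      rw [hΘ, mul_assoc, mul_div_assoc, mul_div_assoc]
  have hsummable : Summable (fun nk : ℕ × ℕ => Θ nk.1 x * t ^ nk.1 / nk.1.factorial *
      (a nk.2 * Ω nk.2 * η ^ nk.2)) :=
    habs.of_norm.congr fun nk => by ring
  have hprod := hΘ_sum.mul hΛ hsummable
  rw [mul_assoc c]
  refine (hprod.sum_range_div_add_one_sub_mul hp).congr_fun fun n => ?_
  rw [hΦ, sum_mul]
  refine sum_congr rfl fun k hk => ?_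
  rw [mul_assoc _ _ (t ^ n),
    ← pow_mul_pow_sub_mul_eq_div_pow_pow_mul ht η ((Nat.mem_range_div_add_one_iff hp).1 hk)]
  ring

theorem bilateral_generating_function
    (α β : ℝ) (hα : 0 < α) (hα1 : α ≠ 1) (hβ : 0 < β) (hβ1 : β ≠ 1)
    (φ₁ φ₂ ψ : ℂ → ℂ) (hφ₁ : Differentiable ℂ φ₁) (hφ₂ : Differentiable ℂ φ₂)
    (hψ : Differentiable ℂ ψ)
    (Θ : ℕ → ℂ → ℂ)
    (hΘ : ∀ n x, Θ n x = Complex.exp (φ₁ x * (Real.log α : ℂ)) *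
      iteratedDeriv n (fun z => ψ z * Complex.exp (-(φ₂ z) * (Real.log β : ℂ))) x)
    (Ω : ℕ → ℂ) (a : ℕ → ℂ) (p : ℕ) (hp : 1 ≤ p)
    (x t η : ℂ) (ht : t ≠ 0) (L : ℂ)
    (hΛ : HasSum (fun k : ℕ => a k * Ω k * η ^ k) L)
    (habs : Summable (fun nk : ℕ × ℕ =>
      ‖a nk.2 * Θ nk.1 x * Ω nk.2 * η ^ nk.2 * t ^ nk.1 / (nk.1.factorial : ℂ)‖))
    (Φ : ℕ → ℂ → ℂ)
    (hΦ : ∀ n ζ, Φ n ζ = ∑ k ∈ Finset.range (n / p + 1),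
      a k / ((n - p * k).factorial : ℂ) * Θ (n - p * k) x * Ω k * ζ ^ k) :
    HasSum (fun n : ℕ => Φ n (η / t ^ p) * t ^ n)
      (Complex.exp (φ₁ x * (Real.log α : ℂ)) * ψ (x + t) *
        Complex.exp (-(φ₂ (x + t)) * (Real.log β : ℂ)) * L) :=
  bilateral_generating_function_general α β φ₁ φ₂ ψ hφ₂ hψ Θ hΘ Ω a p hp x t η ht L hΛ habs Φ hΦ
end

section
/- Let α, β ∈ ℝ⁺ \ {1}, φ₁, φ₂, ψ entire, and Θₙ(x) = α^{φ₁(x)} (dⁿ/dxⁿ)(ψ(x) β^{−φ₂(x)}). Fix p ∈ ℕ, p ≥ 1. Then (assuming absolute convergence of the double series) for all x, y, t, η with t ≠ 0: ∑_{n=0}^∞ ∑_{k=0}^{⌊n/p⌋} (Θ_k(y)/k!) · (Θ_{n−pk}(x)/(n−pk)!) η^k t^{n−pk} = α^{φ₁(x)+φ₁(y)} ψ(x+t) ψ(y+η) β^{−φ₂(x+t)−φ₂(y+η)}. -/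
open Complex Finset

set_option maxHeartbeats 1000000 in
theorem bilinear_generating_function
    (α β : ℝ) (hα : 0 < α) (hα1 : α ≠ 1) (hβ : 0 < β) (hβ1 : β ≠ 1)
    (φ₁ φ₂ ψ : ℂ → ℂ) (hφ₁ : Differentiable ℂ φ₁) (hφ₂ : Differentiable ℂ φ₂)
    (hψ : Differentiable ℂ ψ)
    (Θ : ℕ → ℂ → ℂ)
    (hΘ : ∀ n x, Θ n x = Complex.exp (φ₁ x * (Real.log α : ℂ)) *
      iteratedDeriv n (fun z => ψ z * Complex.exp (-(φ₂ z) * (Real.log β : ℂ))) x)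
    (p : ℕ) (hp : 1 ≤ p)
    (x y t η : ℂ) (ht : t ≠ 0)
    (habs : Summable (fun nk : ℕ × ℕ =>
      ‖Θ nk.2 y / (nk.2.factorial : ℂ) * Θ nk.1 x * η ^ nk.2 * t ^ nk.1 / (nk.1.factorial : ℂ)‖)) :
    HasSum (fun n : ℕ => ∑ k ∈ Finset.range (n / p + 1),
        Θ k y / (k.factorial : ℂ) * (Θ (n - p * k) x / ((n - p * k).factorial : ℂ)) *
          η ^ k * t ^ (n - p * k))
      (Complex.exp ((φ₁ x + φ₁ y) * (Real.log α : ℂ)) * ψ (x + t) * ψ (y + η) *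
        Complex.exp (-(φ₂ (x + t) + φ₂ (y + η)) * (Real.log β : ℂ))) := by
  set F : ℂ → ℂ := fun z => ψ z * Complex.exp (-(φ₂ z) * (Real.log β : ℂ)) with hF
  have hFdiff : Differentiable ℂ F :=
    hψ.mul (((hφ₂.neg).mul_const _).cexp)
  -- Taylor series at x evaluated at x + t
  have h1 : HasSum (fun m : ℕ => Θ m x / (m.factorial : ℂ) * t ^ m)
      (Complex.exp (φ₁ x * (Real.log α : ℂ)) * F (x + t)) := by
    have := (hasSum_taylorSeries_of_entire hFdiff x (x + t)).mul_left
      (Complex.exp (φ₁ x * (Real.log α : ℂ)))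
    refine this.congr_fun fun m => ?_
    rw [hΘ]
    simp [smul_eq_mul]
    ring
  have h2 : HasSum (fun k : ℕ => Θ k y / (k.factorial : ℂ) * η ^ k)
      (Complex.exp (φ₁ y * (Real.log α : ℂ)) * F (y + η)) := by
    have := (hasSum_taylorSeries_of_entire hFdiff y (y + η)).mul_left
      (Complex.exp (φ₁ y * (Real.log α : ℂ)))
    refine this.congr_fun fun k => ?_
    rw [hΘ]
    simp [smul_eq_mul]
    ring
  -- the double series
  have hsummable : Summable (fun mk : ℕ × ℕ =>
      (Θ mk.1 x / (mk.1.factorial : ℂ) * t ^ mk.1) *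
      (Θ mk.2 y / (mk.2.factorial : ℂ) * η ^ mk.2)) := by
    refine (habs.of_norm).congr fun mk => ?_
    ring
  have hprod : HasSum (fun mk : ℕ × ℕ =>
      (Θ mk.1 x / (mk.1.factorial : ℂ) * t ^ mk.1) *
      (Θ mk.2 y / (mk.2.factorial : ℂ) * η ^ mk.2))
      ((Complex.exp (φ₁ x * (Real.log α : ℂ)) * F (x + t)) *
        (Complex.exp (φ₁ y * (Real.log α : ℂ)) * F (y + η))) :=
    HasSum.mul (f := fun m : ℕ => Θ m x / (m.factorial : ℂ) * t ^ m)
      (g := fun k : ℕ => Θ k y / (k.factorial : ℂ) * η ^ k) h1 h2 hsummable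
  -- group by fibers of (m, k) ↦ m + p * k
  have hfib := hprod.tsum_fiberwise (fun mk : ℕ × ℕ => mk.1 + p * mk.2)
  -- identify each fiber sum with the finite inner sum
  have hval : (Complex.exp (φ₁ x * (Real.log α : ℂ)) * F (x + t)) *
      (Complex.exp (φ₁ y * (Real.log α : ℂ)) * F (y + η)) =
      Complex.exp ((φ₁ x + φ₁ y) * (Real.log α : ℂ)) * ψ (x + t) * ψ (y + η) *
        Complex.exp (-(φ₂ (x + t) + φ₂ (y + η)) * (Real.log β : ℂ)) := by
    simp only [hF]
    rw [show (φ₁ x + φ₁ y) * (Real.log α : ℂ) =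
      φ₁ x * (Real.log α : ℂ) + φ₁ y * (Real.log α : ℂ) by ring,
      show -(φ₂ (x + t) + φ₂ (y + η)) * (Real.log β : ℂ) =
      -(φ₂ (x + t)) * (Real.log β : ℂ) + -(φ₂ (y + η)) * (Real.log β : ℂ) by ring,
      Complex.exp_add, Complex.exp_add]
    ring
  rw [hval] at hfib
  refine hfib.congr_fun fun n => ?_
  -- compute the fiber sum
  have hp0 : 0 < p := hp
  let e : {k // k ∈ Finset.range (n / p + 1)} ≃
      ((fun mk : ℕ × ℕ => mk.1 + p * mk.2) ⁻¹' {n}) :=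
    { toFun := fun k => ⟨(n - p * k.1, k.1), by
        have hk := Finset.mem_range.mp k.2
        have hle : p * k.1 ≤ n := by
          have h1 : k.1 ≤ n / p := Nat.lt_succ_iff.mp hk
          calc p * k.1 ≤ p * (n / p) := Nat.mul_le_mul_left p h1
            _ ≤ n := Nat.mul_div_le n p
        simp only [Set.mem_preimage, Set.mem_singleton_iff]
        omega⟩
      invFun := fun mk => ⟨mk.1.2, by
        have h := mk.2
        simp only [Set.mem_preimage, Set.mem_singleton_iff] at h
        refine Finset.mem_range.mpr (Nat.lt_succ_of_le ?_)
        exact (Nat.le_div_iff_mul_le hp0).mpr (by rw [Nat.mul_comm]; omega)⟩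
      left_inv := fun k => by simp
      right_inv := fun mk => by
        have h := mk.2
        simp only [Set.mem_preimage, Set.mem_singleton_iff] at h
        ext
        · simp; omega
        · simp }
  have hfin : HasSum (fun b : ((fun mk : ℕ × ℕ => mk.1 + p * mk.2) ⁻¹' {n}) =>
      (Θ (b : ℕ × ℕ).1 x / (((b : ℕ × ℕ).1.factorial : ℂ)) * t ^ (b : ℕ × ℕ).1) *
      (Θ (b : ℕ × ℕ).2 y / (((b : ℕ × ℕ).2.factorial : ℂ)) * η ^ (b : ℕ × ℕ).2))
      (∑ k ∈ Finset.range (n / p + 1),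
        Θ k y / (k.factorial : ℂ) * (Θ (n - p * k) x / ((n - p * k).factorial : ℂ)) *
          η ^ k * t ^ (n - p * k)) := by
    rw [← e.hasSum_iff]
    have := hasSum_fintype (fun k : {k // k ∈ Finset.range (n / p + 1)} =>
      Θ (k : ℕ) y / ((k : ℕ).factorial : ℂ) *
        (Θ (n - p * k) x / ((n - p * (k : ℕ)).factorial : ℂ)) *
          η ^ (k : ℕ) * t ^ (n - p * (k : ℕ)))
    rw [show (∑ k : {k // k ∈ Finset.range (n / p + 1)},
        Θ (k : ℕ) y / ((k : ℕ).factorial : ℂ) *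
        (Θ (n - p * k) x / ((n - p * (k : ℕ)).factorial : ℂ)) *
          η ^ (k : ℕ) * t ^ (n - p * (k : ℕ))) =
        ∑ k ∈ Finset.range (n / p + 1),
        Θ k y / (k.factorial : ℂ) * (Θ (n - p * k) x / ((n - p * k).factorial : ℂ)) *
          η ^ k * t ^ (n - p * k) from Finset.sum_coe_sort (Finset.range (n / p + 1)) (fun k =>
        Θ k y / (k.factorial : ℂ) * (Θ (n - p * k) x / ((n - p * k).factorial : ℂ)) *
          η ^ k * t ^ (n - p * k))] at this
    refine this.congr_fun fun k => ?_
    show (Θ (n - p * (k : ℕ)) x / (((n - p * (k : ℕ)).factorial : ℂ)) * t ^ (n - p * (k : ℕ))) *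
      (Θ (k : ℕ) y / (((k : ℕ).factorial : ℂ)) * η ^ (k : ℕ)) = _
    ring
  exact hfin.tsum_eq.symm
end
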